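/- Let a₁,a₂,b₁,b₂ ∈ k satisfy a₁ ≠ 0, a₂ ≠ 0, a₁ ≠ a₂, b₁ ≠ 0, b₂ ≠ 0, b₁ ≠ b₂. Then the quotient of A*B by the two-sided ideal generated by the single commutator [a₁p₁ + a₂p₂, b₁q₁ + b₂q₂] is isomorphic as a k-algebra to k^⊕9; in particular every simple module over this quotient is one-dimensional. -/

import Mathlib

open scoped TensorProduct

/-- A two-element family of types, used to form binary free products. -/
def fam (A B : Type) : Bool → Type
  | true => A
  | false => B

instance famSemiring (A B : Type) [Semiring A] [Semiring B] : ∀ b, Semiring (fam A B b)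
  | true => ‹Semiring A›
  | false => ‹Semiring B›

instance famAlgebra (k A B : Type) [CommSemiring k] [Semiring A] [Semiring B]
    [Algebra k A] [Algebra k B] : ∀ b, Algebra k (fam A B b)
  | true => ‹Algebra k A›
  | false => ‹Algebra k B›

/-- The free product (coproduct in the category of unital associative `k`-algebras)
`A * B` of two `k`-algebras. -/
abbrev FP (k A B : Type) [CommSemiring k] [Semiring A] [Semiring B]
    [Algebra k A] [Algebra k B] : Type :=
  LinearAlgebra.FreeProduct k (fam A B)

/-- The canonical map `A →ₐ[k] A * B`. -/
noncomputable def inl (k A B : Type) [CommSemiring k] [Semiring A] [Semiring B]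
    [Algebra k A] [Algebra k B] : A →ₐ[k] FP k A B :=
  LinearAlgebra.FreeProduct.ι k (fam A B) true

/-- The canonical map `B →ₐ[k] A * B`. -/
noncomputable def inr (k A B : Type) [CommSemiring k] [Semiring A] [Semiring B]
    [Algebra k A] [Algebra k B] : B →ₐ[k] FP k A B :=
  LinearAlgebra.FreeProduct.ι k (fam A B) false

/-- The image in `A*B` of the `i`-th standard primitive idempotent of `A = k^⊕3`. -/
noncomputable def pgen (k : Type) [Field k] (i : Fin 3) : FP k (Fin 3 → k) (Fin 3 → k) :=
  inl k (Fin 3 → k) (Fin 3 → k) (Pi.single i 1)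

/-- The image in `A*B` of the `i`-th standard primitive idempotent of `B = k^⊕3`. -/
noncomputable def qgen (k : Type) [Field k] (i : Fin 3) : FP k (Fin 3 → k) (Fin 3 → k) :=
  inr k (Fin 3 → k) (Fin 3 → k) (Pi.single i 1)

/-- The commutator `[a₁p₁ + a₂p₂, b₁q₁ + b₂q₂]` in `k^⊕3 * k^⊕3`. -/
noncomputable def commab (k : Type) [Field k] (a₁ a₂ b₁ b₂ : k) :
    FP k (Fin 3 → k) (Fin 3 → k) :=
  (a₁ • pgen k 0 + a₂ • pgen k 1) * (b₁ • qgen k 0 + b₂ • qgen k 1)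
    - (b₁ • qgen k 0 + b₂ • qgen k 1) * (a₁ • pgen k 0 + a₂ • pgen k 1)

/-- The quotient of `k^⊕3 * k^⊕3` by the two-sided ideal generated by
`[a₁p₁ + a₂p₂, b₁q₁ + b₂q₂]`. -/
abbrev Qab (k : Type) [Field k] (a₁ a₂ b₁ b₂ : k) : Type :=
  RingQuot (fun u v => u = commab k a₁ a₂ b₁ b₂ ∧ v = 0)

/-! In the quotient, `u = a₁p₁ + a₂p₂` commutes with `v = b₁q₁ + b₂q₂`. As `a₁`, `a₂`, `0` are
distinct, every `pᵢ` is a polynomial in `u` (e.g. `u² - a₂u = a₁(a₁ - a₂)p₁`), so it commutes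
with `v`; likewise every `qⱼ` is a polynomial in `v`, so it commutes with every `pᵢ`. The nine
products `pᵢqⱼ` are then complete orthogonal idempotents, giving an algebra map from `k^(3×3)` to
the quotient, inverse to the map sending `pᵢ` to the indicator of the `i`-th row and `qⱼ` to that
of the `j`-th column. A simple module over `k^9` is cut out by one primitive idempotent, through
which all of `k^9` acts by scalars. -/

section Commute

variable {k R : Type*} [Field k] [Ring R] [Algebra k R]

theorem IsIdempotentElem.commute_of_commute_smul_add_smul {P₀ P₁ v : R} {a₀ a₁ : k}
    (h₀ : IsIdempotentElem P₀) (h₁ : IsIdempotentElem P₁) (h₀₁ : P₀ * P₁ = 0)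
    (h₁₀ : P₁ * P₀ = 0) (ha₀ : a₀ ≠ 0) (ha : a₀ ≠ a₁)
    (h : Commute (a₀ • P₀ + a₁ • P₁) v) : Commute P₀ v := by
  set u := a₀ • P₀ + a₁ • P₁
  have hu : u * u - a₁ • u = (a₀ * (a₀ - a₁)) • P₀ := by
    simp only [u, add_mul, mul_add, smul_mul_smul_comm, h₀.eq, h₁.eq, h₀₁, h₁₀, smul_zero]
    module
  have hP₀ : P₀ = (a₀ * (a₀ - a₁))⁻¹ • (u * u - a₁ • u) := by
    rw [hu, inv_smul_smul₀ (mul_ne_zero ha₀ (sub_ne_zero.mpr ha))]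
  rw [hP₀]
  exact ((h.mul_left h).sub_left (h.smul_left a₁)).smul_left _

theorem CompleteOrthogonalIdempotents.commute_of_commute_smul_add_smul {e : Fin 3 → R}
    (he : CompleteOrthogonalIdempotents e) {a₀ a₁ : k} (ha₀ : a₀ ≠ 0) (ha₁ : a₁ ≠ 0)
    (ha : a₀ ≠ a₁) {v : R} (h : Commute (a₀ • e 0 + a₁ • e 1) v) (i : Fin 3) :
    Commute (e i) v := by
  have h₀ : Commute (e 0) v :=
    (he.idem 0).commute_of_commute_smul_add_smul (he.idem 1) (he.ortho (by decide))
      (he.ortho (by decide)) ha₀ ha h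
  have h₁ : Commute (e 1) v :=
    (he.idem 1).commute_of_commute_smul_add_smul (he.idem 0) (he.ortho (by decide))
      (he.ortho (by decide)) ha₁ ha.symm (add_comm (a₀ • e 0) _ ▸ h)
  have h₂ : e 2 = 1 - e 0 - e 1 := by
    rw [← he.complete, Fin.sum_univ_three]
    abel
  fin_cases i
  · exact h₀
  · exact h₁
  · simpa [h₂] using ((Commute.one_left v).sub_left h₀).sub_left h₁

end Commute

theorem CompleteOrthogonalIdempotents.mul_of_commute {R I J : Type*} [Semiring R] [Fintype I]
    [Fintype J] {e : I → R} {f : J → R} (he : CompleteOrthogonalIdempotents e)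
    (hf : CompleteOrthogonalIdempotents f) (hef : ∀ i j, Commute (e i) (f j)) :
    CompleteOrthogonalIdempotents fun m : I × J ↦ e m.1 * f m.2 := by
  have hmul (m n : I × J) :
      e m.1 * f m.2 * (e n.1 * f n.2) = e m.1 * e n.1 * (f m.2 * f n.2) := by
    rw [mul_assoc, ← mul_assoc (f m.2), ← (hef n.1 m.2).eq, mul_assoc, mul_assoc]
  refine ⟨⟨fun m ↦ ?_, fun m n hmn ↦ ?_⟩, ?_⟩
  · rw [IsIdempotentElem, hmul, (he.idem _).eq, (hf.idem _).eq]
  · change e m.1 * f m.2 * (e n.1 * f n.2) = 0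
    rw [hmul]
    rcases eq_or_ne m.1 n.1 with h₁ | h₁
    · rw [hf.ortho fun h₂ ↦ hmn (Prod.ext h₁ h₂), mul_zero]
    · rw [he.ortho h₁, zero_mul]
  · rw [Fintype.sum_prod_type, ← Finset.sum_mul_sum, he.complete, hf.complete, one_mul]

section PiAlgHom

variable {k R I : Type*} [CommSemiring k] [Semiring R] [Algebra k R]

variable (k) in
noncomputable def CompleteOrthogonalIdempotents.piAlgHom [Fintype I] {e : I → R}
    (he : CompleteOrthogonalIdempotents e) : (I → k) →ₐ[k] R :=
  AlgHom.ofLinearMap (Fintype.linearCombination k e)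
    (by simp [Fintype.linearCombination_apply, he.complete])
    (fun x y ↦ by
      classical
      simp only [Fintype.linearCombination_apply, Finset.sum_mul_sum, smul_mul_smul_comm,
        he.mul_eq, smul_ite, smul_zero, Finset.sum_ite_eq, Finset.mem_univ, if_true, Pi.mul_apply])

theorem CompleteOrthogonalIdempotents.piAlgHom_single [Fintype I] [DecidableEq I] {e : I → R}
    (he : CompleteOrthogonalIdempotents e) (i : I) : he.piAlgHom k (Pi.single i 1) = e i := by
  simp [piAlgHom, Fintype.linearCombination_apply_single]

theorem Pi.algHom_ext_single [Finite I] [DecidableEq I] {f g : (I → k) →ₐ[k] R}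
    (h : ∀ i, f (Pi.single i 1) = g (Pi.single i 1)) : f = g :=
  AlgHom.toLinearMap_injective <| LinearMap.pi_ext fun i x ↦ by
    simpa [← map_smul, ← Pi.single_smul'] using congrArg (x • ·) (h i)

end PiAlgHom

theorem rank_eq_one_of_isSimpleModule {k Q I : Type*} [Field k] [Ring Q] [Algebra k Q]
    [Fintype I] [DecidableEq I] (e : Q ≃ₐ[k] (I → k)) (M : Type*) [AddCommGroup M] [Module Q M]
    [Module k M] [IsScalarTower k Q M] [IsSimpleModule Q M] : Module.rank k M = 1 := by
  have := IsSimpleModule.nontrivial Q M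
  obtain ⟨v, hv⟩ := exists_ne (0 : M)
  have hsum : ∑ i, e.symm (Pi.single i 1) = 1 := by
    rw [← map_sum, Finset.univ_sum_single]
    exact map_one e.symm
  obtain ⟨i, hw⟩ : ∃ i, e.symm (Pi.single i 1) • v ≠ 0 := by
    by_contra! h
    exact hv (by rw [← one_smul Q v, ← hsum, Finset.sum_smul, Finset.sum_eq_zero fun i _ ↦ h i])
  set w := e.symm (Pi.single i 1) • v
  have hscalar (x : Q) : x • w = e x i • w := by
    have : x * e.symm (Pi.single i 1) = e x i • e.symm (Pi.single i 1) := by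
      apply e.injective
      rw [map_mul, map_smul, e.apply_symm_apply, ← Pi.single_mul_right, mul_one,
        ← Pi.single_smul', smul_eq_mul, mul_one]
    rw [← mul_smul, this, smul_assoc]
  refine rank_eq_one w hw fun u ↦ ?_
  obtain ⟨x, rfl⟩ := Submodule.mem_span_singleton.mp
    (IsSimpleModule.span_singleton_eq_top Q hw ▸ Submodule.mem_top : u ∈ Submodule.span Q {w})
  exact ⟨e x i, (hscalar x).symm⟩

namespace FP

open LinearAlgebra.FreeProduct

variable {k A B C : Type} [CommSemiring k] [Semiring A] [Semiring B] [Semiring C] [Algebra k A]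
  [Algebra k B] [Algebra k C]

noncomputable def lift (f : A →ₐ[k] C) (g : B →ₐ[k] C) : FP k A B →ₐ[k] C :=
  LinearAlgebra.FreeProduct.lift k (fam A B) fun {i} ↦ match i with
    | true => f
    | false => g

theorem lift_comp_inl (f : A →ₐ[k] C) (g : B →ₐ[k] C) : (lift f g).comp (inl k A B) = f :=
  lift_comp_ι ..

theorem lift_comp_inr (f : A →ₐ[k] C) (g : B →ₐ[k] C) : (lift f g).comp (inr k A B) = g :=
  lift_comp_ι ..

theorem algHom_ext {f g : FP k A B →ₐ[k] C} (hl : f.comp (inl k A B) = g.comp (inl k A B))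
    (hr : f.comp (inr k A B) = g.comp (inr k A B)) : f = g := by
  apply (LinearAlgebra.FreeProduct.lift k (fam A B)).symm.injective
  funext i
  cases i
  exacts [hr, hl]

end FP

noncomputable def gridHom (k : Type) [Field k] :
    FP k (Fin 3 → k) (Fin 3 → k) →ₐ[k] (Fin 3 × Fin 3 → k) :=
  FP.lift (AlgHom.pi fun m ↦ Pi.evalAlgHom k _ m.1) (AlgHom.pi fun m ↦ Pi.evalAlgHom k _ m.2)

theorem gridHom_pgen_mul_qgen (k : Type) [Field k] (i j : Fin 3) :
    gridHom k (pgen k i * qgen k j) = Pi.single (i, j) 1 := by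
  rw [map_mul, pgen, qgen, ← AlgHom.comp_apply, ← AlgHom.comp_apply, gridHom, FP.lift_comp_inl,
    FP.lift_comp_inr]
  funext m
  simp [Pi.single_apply, Prod.ext_iff, ← ite_and, and_comm]

theorem gridHom_commab (k : Type) [Field k] (a₁ a₂ b₁ b₂ : k) :
    gridHom k (commab k a₁ a₂ b₁ b₂) = 0 := by
  rw [commab, map_sub, map_mul, map_mul, mul_comm, sub_self]

namespace Qab

variable (k : Type) [Field k] (a₁ a₂ b₁ b₂ : k)

noncomputable abbrev mk : FP k (Fin 3 → k) (Fin 3 → k) →ₐ[k] Qab k a₁ a₂ b₁ b₂ :=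
  RingQuot.mkAlgHom k _

theorem completeOrthogonalIdempotents_mk_pgen :
    CompleteOrthogonalIdempotents fun i ↦ mk k a₁ a₂ b₁ b₂ (pgen k i) :=
  ((CompleteOrthogonalIdempotents.single fun _ : Fin 3 ↦ k).map
    (inl k (Fin 3 → k) (Fin 3 → k)).toRingHom).map (mk k a₁ a₂ b₁ b₂).toRingHom

theorem completeOrthogonalIdempotents_mk_qgen :
    CompleteOrthogonalIdempotents fun j ↦ mk k a₁ a₂ b₁ b₂ (qgen k j) :=
  ((CompleteOrthogonalIdempotents.single fun _ : Fin 3 ↦ k).map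
    (inr k (Fin 3 → k) (Fin 3 → k)).toRingHom).map (mk k a₁ a₂ b₁ b₂).toRingHom

theorem commute_mk_smul_add_smul :
    Commute (a₁ • mk k a₁ a₂ b₁ b₂ (pgen k 0) + a₂ • mk k a₁ a₂ b₁ b₂ (pgen k 1))
      (b₁ • mk k a₁ a₂ b₁ b₂ (qgen k 0) + b₂ • mk k a₁ a₂ b₁ b₂ (qgen k 1)) := by
  have h := RingQuot.mkAlgHom_rel k (s := fun u v ↦ u = commab k a₁ a₂ b₁ b₂ ∧ v = 0) ⟨rfl, rfl⟩
  rw [commab, map_zero, map_sub, sub_eq_zero] at h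
  simp only [map_mul, map_add, map_smul] at h
  exact h

variable {k a₁ a₂ b₁ b₂}

theorem commute_mk_pgen_mk_qgen (ha₁ : a₁ ≠ 0) (ha₂ : a₂ ≠ 0) (ha : a₁ ≠ a₂) (hb₁ : b₁ ≠ 0)
    (hb₂ : b₂ ≠ 0) (hb : b₁ ≠ b₂) (i j : Fin 3) :
    Commute (mk k a₁ a₂ b₁ b₂ (pgen k i)) (mk k a₁ a₂ b₁ b₂ (qgen k j)) := by
  have hp := (completeOrthogonalIdempotents_mk_pgen k a₁ a₂ b₁ b₂).commute_of_commute_smul_add_smul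
    (R := Qab k a₁ a₂ b₁ b₂) ha₁ ha₂ ha (commute_mk_smul_add_smul k a₁ a₂ b₁ b₂) i
  exact ((completeOrthogonalIdempotents_mk_qgen k a₁ a₂ b₁ b₂).commute_of_commute_smul_add_smul
    (R := Qab k a₁ a₂ b₁ b₂) hb₁ hb₂ hb hp.symm j).symm

variable (k a₁ a₂ b₁ b₂) in
noncomputable def toGrid : Qab k a₁ a₂ b₁ b₂ →ₐ[k] (Fin 3 × Fin 3 → k) :=
  RingQuot.liftAlgHom k ⟨gridHom k, by rintro _ _ ⟨rfl, rfl⟩; rw [gridHom_commab, map_zero]⟩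

variable (hc : ∀ i j, Commute (mk k a₁ a₂ b₁ b₂ (pgen k i)) (mk k a₁ a₂ b₁ b₂ (qgen k j)))

noncomputable def ofGrid : (Fin 3 × Fin 3 → k) →ₐ[k] Qab k a₁ a₂ b₁ b₂ :=
  ((completeOrthogonalIdempotents_mk_pgen k a₁ a₂ b₁ b₂).mul_of_commute
    (completeOrthogonalIdempotents_mk_qgen k a₁ a₂ b₁ b₂) hc).piAlgHom k

theorem ofGrid_single (m : Fin 3 × Fin 3) :
    ofGrid hc (Pi.single m 1) = mk k a₁ a₂ b₁ b₂ (pgen k m.1 * qgen k m.2) := by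
  rw [ofGrid, CompleteOrthogonalIdempotents.piAlgHom_single, map_mul]

theorem toGrid_comp_ofGrid : (toGrid k a₁ a₂ b₁ b₂).comp (ofGrid hc) = AlgHom.id k _ :=
  Pi.algHom_ext_single fun m ↦ by
    rw [AlgHom.comp_apply, ofGrid_single, toGrid, RingQuot.liftAlgHom_mkAlgHom_apply,
      gridHom_pgen_mul_qgen, AlgHom.id_apply]

theorem ofGrid_toGrid_of_mem_range {x : Qab k a₁ a₂ b₁ b₂} (hx : x ∈ Set.range (ofGrid hc)) :
    ofGrid hc (toGrid k a₁ a₂ b₁ b₂ x) = x := by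
  obtain ⟨y, rfl⟩ := hx
  rw [← AlgHom.comp_apply (toGrid k a₁ a₂ b₁ b₂), toGrid_comp_ofGrid, AlgHom.id_apply]

theorem mk_pgen_mem_range_ofGrid (i : Fin 3) :
    mk k a₁ a₂ b₁ b₂ (pgen k i) ∈ Set.range (ofGrid hc) :=
  ⟨∑ j, Pi.single (i, j) 1, by simp_rw [map_sum, ofGrid_single, map_mul, ← Finset.mul_sum,
    (completeOrthogonalIdempotents_mk_qgen k a₁ a₂ b₁ b₂).complete, mul_one]⟩

theorem mk_qgen_mem_range_ofGrid (j : Fin 3) :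
    mk k a₁ a₂ b₁ b₂ (qgen k j) ∈ Set.range (ofGrid hc) :=
  ⟨∑ i, Pi.single (i, j) 1, by simp_rw [map_sum, ofGrid_single, map_mul, ← Finset.sum_mul,
    (completeOrthogonalIdempotents_mk_pgen k a₁ a₂ b₁ b₂).complete, one_mul]⟩

theorem ofGrid_comp_toGrid : (ofGrid hc).comp (toGrid k a₁ a₂ b₁ b₂) = AlgHom.id k _ :=
  RingQuot.ringQuot_ext' _ _ _ <| FP.algHom_ext
    (Pi.algHom_ext_single fun i ↦ ofGrid_toGrid_of_mem_range hc (mk_pgen_mem_range_ofGrid hc i))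
    (Pi.algHom_ext_single fun j ↦ ofGrid_toGrid_of_mem_range hc (mk_qgen_mem_range_ofGrid hc j))

noncomputable def equivGrid : Qab k a₁ a₂ b₁ b₂ ≃ₐ[k] (Fin 3 × Fin 3 → k) :=
  AlgEquiv.ofAlgHom (toGrid k a₁ a₂ b₁ b₂) (ofGrid hc) (toGrid_comp_ofGrid hc)
    (ofGrid_comp_toGrid hc)

end Qab

theorem statement9_general (k : Type) [Field k]
    (a₁ a₂ b₁ b₂ : k) (ha₁ : a₁ ≠ 0) (ha₂ : a₂ ≠ 0) (ha : a₁ ≠ a₂)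
    (hb₁ : b₁ ≠ 0) (hb₂ : b₂ ≠ 0) (hb : b₁ ≠ b₂) :
    Nonempty (Qab k a₁ a₂ b₁ b₂ ≃ₐ[k] (Fin 9 → k)) ∧
    ∀ (M : Type) [AddCommGroup M] [Module (Qab k a₁ a₂ b₁ b₂) M] [Module k M]
      [IsScalarTower k (Qab k a₁ a₂ b₁ b₂) M],
      IsSimpleModule (Qab k a₁ a₂ b₁ b₂) M → Module.rank k M = 1 := by
  have e : Qab k a₁ a₂ b₁ b₂ ≃ₐ[k] (Fin 9 → k) :=
    (Qab.equivGrid (Qab.commute_mk_pgen_mk_qgen ha₁ ha₂ ha hb₁ hb₂ hb)).trans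
      (AlgEquiv.piCongrLeft' k (fun _ ↦ k) finProdFinEquiv)
  exact ⟨⟨e⟩, fun M _ _ _ _ _ ↦ rank_eq_one_of_isSimpleModule (Q := Qab k a₁ a₂ b₁ b₂) e M⟩

theorem statement9 (k : Type) [Field k] [IsAlgClosed k] [CharZero k]
    (a₁ a₂ b₁ b₂ : k) (ha₁ : a₁ ≠ 0) (ha₂ : a₂ ≠ 0) (ha : a₁ ≠ a₂)
    (hb₁ : b₁ ≠ 0) (hb₂ : b₂ ≠ 0) (hb : b₁ ≠ b₂) :
    Nonempty (Qab k a₁ a₂ b₁ b₂ ≃ₐ[k] (Fin 9 → k)) ∧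
    ∀ (M : Type) [AddCommGroup M] [Module (Qab k a₁ a₂ b₁ b₂) M] [Module k M]
      [IsScalarTower k (Qab k a₁ a₂ b₁ b₂) M],
      IsSimpleModule (Qab k a₁ a₂ b₁ b₂) M → Module.rank k M = 1 :=
  statement9_general k a₁ a₂ b₁ b₂ ha₁ ha₂ ha hb₁ hb₂ hb
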